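/- Let σ : ℝ → [0,1] be 2-admissible with associated point t_σ (so σ'(t_σ) ≠ 0 and σ''(t_σ) ≠ 0). For R > 0 define f_mult(x, y) = (R² / (4·σ''(t_σ))) · ( σ(2(x+y)/R + t_σ) − 2·σ((x+y)/R + t_σ) − σ(2(x−y)/R + t_σ) + 2·σ((x−y)/R + t_σ) ). Then for any a > 0 and all x, y ∈ [−a, a] one has |f_mult(x, y) − x·y| ≤ (20 · ‖σ'''‖_∞ · a³) / (3 · |σ''(t_σ)|) · (1/R). -/

import Mathlib

open Real Set

/-!
`f_mult` is a scaled difference of two second differences of `σ` at `tσ`. By Taylor's theorem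
with Lagrange remainder, `σ(t + 2h) − 2σ(t + h) + σ(t) = σ''(t) h² + r` with
`|r| ≤ (8 + 2)/6 · ‖σ'''‖_∞ |h|³`. Taking `h = (x ± y)/R`, the quadratic terms combine to
`σ''(tσ) ((x + y)² − (x − y)²)/R² = 4 σ''(tσ) x y / R²`, and `|x ± y| ≤ 2a` bounds the remainders.
-/

/-- Supremum norm of a function `g : ℝ → ℝ`. -/
noncomputable def supNorm (g : ℝ → ℝ) : ℝ := ⨆ x : ℝ, |g x|

/-- A function `σ : ℝ → [0,1]` is 2-admissible with associated point `tσ`: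
it is nondecreasing, Lipschitz continuous, three times continuously differentiable with
bounded derivatives, its first and second derivative at `tσ` are nonzero, and
`|σ(y) − 1| ≤ 1/y` for `y > 0` and `|σ(y)| ≤ 1/|y|` for `y < 0`. -/
def TwoAdmissible (σ : ℝ → ℝ) (tσ : ℝ) : Prop :=
  (∀ x : ℝ, σ x ∈ Set.Icc (0 : ℝ) 1) ∧ Monotone σ ∧ (∃ L : NNReal, LipschitzWith L σ) ∧
  ContDiff ℝ 3 σ ∧
  (∀ k : ℕ, k ≤ 3 → ∃ B : ℝ, ∀ x : ℝ, |iteratedDeriv k σ x| ≤ B) ∧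
  deriv σ tσ ≠ 0 ∧ deriv (deriv σ) tσ ≠ 0 ∧
  (∀ y : ℝ, 0 < y → |σ y - 1| ≤ 1 / y) ∧ (∀ y : ℝ, y < 0 → |σ y| ≤ 1 / |y|)

lemma abs_le_supNorm {g : ℝ → ℝ} (hg : BddAbove (range fun x => |g x|)) (x : ℝ) :
    |g x| ≤ supNorm g :=
  le_ciSup hg x

lemma iteratedDeriv_three (f : ℝ → ℝ) : iteratedDeriv 3 f = deriv (deriv (deriv f)) := by
  simp only [iteratedDeriv_succ, iteratedDeriv_zero]

open Nat in
lemma abs_sub_taylorWithinEval_le {f : ℝ → ℝ} {x₀ x M : ℝ} {n : ℕ}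
    (hf : ContDiffOn ℝ (n + 1) f (uIcc x₀ x)) (hM : ∀ y, |iteratedDeriv (n + 1) f y| ≤ M) :
    |f x - taylorWithinEval f n (uIcc x₀ x) x₀ x| ≤ M * |x - x₀| ^ (n + 1) / (n + 1)! := by
  rcases eq_or_ne x₀ x with rfl | hx
  · simp
  obtain ⟨y, -, hy⟩ := taylor_mean_remainder_lagrange_iteratedDeriv hx hf
  rw [hy, abs_div, abs_mul, abs_pow, Nat.abs_cast]
  gcongr
  exact hM y

lemma taylorWithinEval_two_eq {f : ℝ → ℝ} (hf : ContDiff ℝ 2 f) {x₀ x : ℝ} (hx : x₀ ≠ x) :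
    taylorWithinEval f 2 (uIcc x₀ x) x₀ x =
      f x₀ + deriv f x₀ * (x - x₀) + deriv (deriv f) x₀ * (x - x₀) ^ 2 / 2 := by
  have hderiv (k : ℕ) (hk : k ≤ 2) :
      iteratedDerivWithin k f (uIcc x₀ x) x₀ = iteratedDeriv k f x₀ :=
    iteratedDerivWithin_eq_iteratedDeriv (uniqueDiffOn_uIcc hx)
      (hf.of_le (by exact_mod_cast hk)).contDiffAt left_mem_uIcc
  simp only [taylor_within_apply, Finset.sum_range_succ, Finset.sum_range_zero,
    hderiv 0 (by norm_num), hderiv 1 (by norm_num), hderiv 2 (by norm_num),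
    iteratedDeriv_zero, iteratedDeriv_succ, smul_eq_mul]
  norm_num
  ring

lemma abs_taylor_two_remainder_le {f : ℝ → ℝ} (hf : ContDiff ℝ 3 f) {M : ℝ}
    (hM : ∀ y, |iteratedDeriv 3 f y| ≤ M) (t h : ℝ) :
    |f (t + h) - (f t + deriv f t * h + deriv (deriv f) t * h ^ 2 / 2)| ≤ M * |h| ^ 3 / 6 := by
  rcases eq_or_ne h 0 with rfl | hh
  · simp
  have hne : t ≠ t + h := fun e => hh (by linarith)
  have := abs_sub_taylorWithinEval_le (n := 2) (x₀ := t) (x := t + h) hf.contDiffOn hM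
  rw [taylorWithinEval_two_eq (hf.of_le (by norm_num)) hne] at this
  simpa [Nat.factorial] using this

lemma abs_second_difference_sub_le {f : ℝ → ℝ} (hf : ContDiff ℝ 3 f) {M : ℝ}
    (hM : ∀ y, |iteratedDeriv 3 f y| ≤ M) (t h : ℝ) :
    |f (t + 2 * h) - 2 * f (t + h) + f t - deriv (deriv f) t * h ^ 2| ≤ 5 / 3 * M * |h| ^ 3 := by
  have h₂ := abs_taylor_two_remainder_le hf hM t (2 * h)
  have h₁ := abs_taylor_two_remainder_le hf hM t h
  rw [abs_mul, abs_two] at h₂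
  calc |f (t + 2 * h) - 2 * f (t + h) + f t - deriv (deriv f) t * h ^ 2|
      = |(f (t + 2 * h) - (f t + deriv f t * (2 * h) + deriv (deriv f) t * (2 * h) ^ 2 / 2))
          - 2 * (f (t + h) - (f t + deriv f t * h + deriv (deriv f) t * h ^ 2 / 2))| := by
        ring_nf
    _ ≤ M * (2 * |h|) ^ 3 / 6 + 2 * (M * |h| ^ 3 / 6) := by
        refine (abs_sub _ _).trans (add_le_add h₂ ?_)
        rw [abs_mul, abs_two]
        gcongr
    _ = 5 / 3 * M * |h| ^ 3 := by ring

/-- approximation of the product by the network `f_mult`. -/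
theorem product_network_approx (σ : ℝ → ℝ) (tσ : ℝ) (hσ : TwoAdmissible σ tσ)
    (R : ℝ) (hR : 0 < R)
    (f_mult : ℝ → ℝ → ℝ)
    (hfm : ∀ x y : ℝ, f_mult x y = (R ^ 2 / (4 * deriv (deriv σ) tσ)) *
      (σ (2 * (x + y) / R + tσ) - 2 * σ ((x + y) / R + tσ)
        - σ (2 * (x - y) / R + tσ) + 2 * σ ((x - y) / R + tσ))) :
    ∀ a : ℝ, 0 < a → ∀ x ∈ Set.Icc (-a) a, ∀ y ∈ Set.Icc (-a) a,
      |f_mult x y - x * y| ≤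
        (20 * supNorm (deriv (deriv (deriv σ))) * a ^ 3) / (3 * |deriv (deriv σ) tσ|) * (1 / R) := by
  intro a _ x hx y hy
  obtain ⟨-, -, -, hσ3, hbdd, -, hd2, -, -⟩ := hσ
  set M := supNorm (deriv (deriv (deriv σ)))
  set d2 := deriv (deriv σ) tσ
  have hM : ∀ z, |iteratedDeriv 3 σ z| ≤ M := by
    obtain ⟨B, hB⟩ := hbdd 3 le_rfl
    rw [iteratedDeriv_three] at hB ⊢
    exact abs_le_supNorm ⟨B, by rintro _ ⟨z, rfl⟩; exact hB z⟩
  set E : ℝ → ℝ := fun u => σ (2 * u / R + tσ) - 2 * σ (u / R + tσ) + σ tσ - d2 * (u / R) ^ 2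
  have hE : ∀ u, |u| ≤ 2 * a → |E u| ≤ 5 / 3 * M * (2 * a / R) ^ 3 := by
    intro u hu
    have := abs_second_difference_sub_le hσ3 hM tσ (u / R)
    rw [show tσ + 2 * (u / R) = 2 * u / R + tσ by ring, add_comm tσ] at this
    refine this.trans ?_
    have hM0 : 0 ≤ M := (abs_nonneg _).trans (hM 0)
    rw [abs_div, abs_of_pos hR]
    gcongr
  have hsplit : f_mult x y - x * y = R ^ 2 / (4 * d2) * (E (x + y) - E (x - y)) := by
    simp only [hfm, E]
    field_simp
    ring
  have hxa : |x| ≤ a := abs_le.mpr hx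
  have hya : |y| ≤ a := abs_le.mpr hy
  calc |f_mult x y - x * y|
      = R ^ 2 / (4 * |d2|) * |E (x + y) - E (x - y)| := by
        rw [hsplit, abs_mul, abs_div, abs_mul, abs_of_pos (by positivity : 0 < R ^ 2)]
        norm_num
    _ ≤ R ^ 2 / (4 * |d2|) * (5 / 3 * M * (2 * a / R) ^ 3 + 5 / 3 * M * (2 * a / R) ^ 3) := by
        gcongr
        refine (abs_sub _ _).trans (add_le_add (hE _ ?_) (hE _ ?_))
        · linarith [abs_add_le x y]
        · linarith [abs_sub x y]
    _ = _ := by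
        field_simp
        ring
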